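/- Let 𝔤 be a Lie algebra over a field k, and k ⊆ k′ a field extension. A Lie subalgebra 𝔧 ⊆ 𝔤 is a Cartan subalgebra (nilpotent and self-normalizing) if and only if 𝔧 ⊗_k k′ is a Cartan subalgebra of 𝔤 ⊗_k k′. -/

import Mathlib

open TensorProduct

/-! A free nontrivial algebra `A` over `R` (such as a field extension) is faithfully flat, so base
change along it reflects equality of submodules. Nilpotency then descends through the lower
central series, which commutes with base change, using `A ⊗ J ≃ J_A` (flatness), where
`J_A = J.baseChange A` is the image of `A ⊗ J` in `A ⊗ L`. For
self-normalization, `N(J_A) = N(J)_A`: taking the coordinate along an `R`-basis of `A` commutes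
with bracketing against `1 ⊗ j`, so every coordinate of an element of `N(J_A)` normalizes `J`. -/

section BaseChange

variable {R A L : Type*} [CommRing R] [CommRing A] [Algebra R A] [LieRing L] [LieAlgebra R L]

namespace LieHom

variable {L' : Type*} [LieRing L'] [LieAlgebra R L']

variable (A) in
noncomputable def baseChange (g : L →ₗ⁅R⁆ L') : A ⊗[R] L →ₗ⁅A⁆ A ⊗[R] L' :=
  { g.toLinearMap.baseChange A with
    map_lie' := (LieAlgebra.ExtendScalars.map (AlgHom.id R A) g).map_lie _ _ }

end LieHom

namespace LieSubalgebra

variable (A) in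
noncomputable def baseChange (J : LieSubalgebra R L) : LieSubalgebra A (A ⊗[R] L) :=
  (J.incl.baseChange A).range

@[simp] lemma baseChange_toSubmodule (J : LieSubalgebra R L) :
    (J.baseChange A).toSubmodule = J.toSubmodule.baseChange A := rfl

lemma baseChange_incl_injective [Module.Flat R A] (J : LieSubalgebra R L) :
    Function.Injective (J.incl.baseChange A) :=
  Module.Flat.lTensor_preserves_injective_linearMap J.toSubmodule.subtype Subtype.val_injective

variable (A) in
noncomputable def baseChangeEquiv [Module.Flat R A] (J : LieSubalgebra R L) :
    A ⊗[R] J ≃ₗ⁅A⁆ J.baseChange A :=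
  LieEquiv.ofInjective _ J.baseChange_incl_injective

theorem baseChange_inj [Module.FaithfullyFlat R A] {J K : LieSubalgebra R L} :
    J.baseChange A = K.baseChange A ↔ J = K := by
  rw [← toSubmodule_inj, ← toSubmodule_inj, baseChange_toSubmodule, baseChange_toSubmodule,
    Submodule.baseChange_inj]

end LieSubalgebra

theorem LieModule.isNilpotent_tensorProduct_iff [Module.FaithfullyFlat R A] (M : Type*)
    [AddCommGroup M] [Module R M] [LieRingModule L M] [LieModule R L M] :
    IsNilpotent (A ⊗[R] L) (A ⊗[R] M) ↔ IsNilpotent L M := by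
  refine ⟨?_, fun _ ↦ inferInstance⟩
  simp only [isNilpotent_iff A, isNilpotent_iff R,
    LieSubmodule.lowerCentralSeries_tensor_eq_baseChange, ← LieSubmodule.baseChange_bot (A := A),
    ← LieSubmodule.toSubmodule_inj, LieSubmodule.coe_baseChange, Submodule.baseChange_inj,
    imp_self]

theorem LieSubalgebra.isNilpotent_baseChange_iff [Module.FaithfullyFlat R A]
    (J : LieSubalgebra R L) :
    LieRing.IsNilpotent (J.baseChange A) ↔ LieRing.IsNilpotent J := by
  rw [← (J.baseChangeEquiv A).nilpotent_iff_equiv_nilpotent]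
  exact LieModule.isNilpotent_tensorProduct_iff J

theorem LieSubalgebra.baseChange_le_normalizer_baseChange (J : LieSubalgebra R L) :
    J.normalizer.baseChange A ≤ (J.baseChange A).normalizer := by
  rw [← toSubmodule_le_toSubmodule, baseChange_toSubmodule, Submodule.baseChange_eq_span,
    Submodule.span_le]
  rintro _ ⟨x, hx, rfl⟩
  rw [SetLike.mem_coe, mem_toSubmodule, mem_normalizer_iff]
  rintro _ ⟨z, rfl⟩
  have hmaps : ∀ y ∈ J.toSubmodule, LieModule.toEnd R L L x y ∈ J.toSubmodule :=
    (mem_normalizer_iff J x).mp hx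
  refine ⟨((LieModule.toEnd R L L x).restrict hmaps).baseChange A z, ?_⟩
  rw [← LieModule.toEnd_apply_apply A, TensorProduct.mk_apply, LieModule.toEnd_baseChange]
  change (J.toSubmodule.subtype.baseChange A ∘ₗ _) z =
    ((LieModule.toEnd R L L x).baseChange A ∘ₗ J.toSubmodule.subtype.baseChange A) z
  rw [← LinearMap.baseChange_comp, ← LinearMap.baseChange_comp]
  rfl

section Basis

variable {ι : Type*} [DecidableEq ι] (b : Module.Basis ι R A)

theorem Submodule.mem_baseChange_iff_forall_equivFinsuppOfBasisLeft_mem {M : Type*}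
    [AddCommGroup M] [Module R M] (p : Submodule R M) (x : A ⊗[R] M) :
    x ∈ p.baseChange A ↔ ∀ i, equivFinsuppOfBasisLeft b x i ∈ p := by
  refine ⟨?_, fun h ↦ ?_⟩
  · rintro ⟨u, rfl⟩ i
    induction u using TensorProduct.induction_on with
    | zero => simp
    | tmul a m => simpa [equivFinsuppOfBasisLeft_apply_tmul_apply] using p.smul_mem _ m.2
    | add u v hu hv => simpa using add_mem hu hv
  · rw [← (equivFinsuppOfBasisLeft b).symm_apply_apply x, equivFinsuppOfBasisLeft_symm_apply]
    exact Submodule.sum_mem _ fun i _ ↦ tmul_mem_baseChange_of_mem _ (h i)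

theorem TensorProduct.equivFinsuppOfBasisLeft_lie_one_tmul (x : A ⊗[R] L) (y : L) (i : ι) :
    equivFinsuppOfBasisLeft b ⁅x, 1 ⊗ₜ y⁆ i = ⁅equivFinsuppOfBasisLeft b x i, y⁆ := by
  induction x using TensorProduct.induction_on with
  | zero => simp
  | tmul a z => simp [LieAlgebra.ExtendScalars.bracket_tmul]
  | add u v hu hv => simp [add_lie, hu, hv]

end Basis

theorem LieSubalgebra.normalizer_baseChange_le [Module.Free R A] (J : LieSubalgebra R L) :
    (J.baseChange A).normalizer ≤ J.normalizer.baseChange A := by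
  classical
  let b := Module.Free.chooseBasis R A
  intro x hx
  rw [← mem_toSubmodule, baseChange_toSubmodule,
    Submodule.mem_baseChange_iff_forall_equivFinsuppOfBasisLeft_mem b]
  intro i
  rw [mem_toSubmodule, mem_normalizer_iff]
  intro y hy
  have hxy := (mem_normalizer_iff _ x).mp hx _ (Submodule.tmul_mem_baseChange_of_mem (1 : A) hy)
  rw [← mem_toSubmodule, baseChange_toSubmodule,
    Submodule.mem_baseChange_iff_forall_equivFinsuppOfBasisLeft_mem b] at hxy
  simpa [TensorProduct.equivFinsuppOfBasisLeft_lie_one_tmul] using hxy i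

theorem LieSubalgebra.normalizer_baseChange [Module.Free R A] (J : LieSubalgebra R L) :
    (J.baseChange A).normalizer = J.normalizer.baseChange A :=
  le_antisymm J.normalizer_baseChange_le J.baseChange_le_normalizer_baseChange

theorem LieSubalgebra.isCartanSubalgebra_baseChange_iff [Module.Free R A] [Nontrivial A]
    (J : LieSubalgebra R L) :
    (J.baseChange A).IsCartanSubalgebra ↔ J.IsCartanSubalgebra := by
  have hnorm : (J.baseChange A).normalizer = J.baseChange A ↔ J.normalizer = J := by
    rw [normalizer_baseChange, baseChange_inj]
  constructor <;> rintro ⟨hnil, hself⟩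
  · exact ⟨J.isNilpotent_baseChange_iff.mp hnil, hnorm.mp hself⟩
  · exact ⟨J.isNilpotent_baseChange_iff.mpr hnil, hnorm.mpr hself⟩

end BaseChange

/-- A Lie subalgebra `𝔧 ⊆ 𝔤` over a field `k` is a Cartan subalgebra if and
only if its base change `𝔧 ⊗_k k′` is a Cartan subalgebra of `𝔤 ⊗_k k′`, for
any field extension `k ⊆ k′`. -/
theorem stmt_10 {k k' L : Type*} [Field k] [Field k'] [Algebra k k']
    [LieRing L] [LieAlgebra k L] (J : LieSubalgebra k L) :
    ∀ J' : LieSubalgebra k' (k' ⊗[k] L),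
      J'.toSubmodule = J.toSubmodule.baseChange k' →
      (J.IsCartanSubalgebra ↔ J'.IsCartanSubalgebra) := by
  intro J' hJ'
  obtain rfl : J' = J.baseChange k' := LieSubalgebra.toSubmodule_injective hJ'
  exact J.isCartanSubalgebra_baseChange_iff.symm
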